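/- Let p, q, m, n be positive integers such that not both q = 1 and m = 1 hold, let G = G(p,q,m,n), let k = p+q+m+n−1 be its number of vertices, and let α be the independence number of G. Then ρ(G) < sqrt(α·(k−α)), i.e., the spectral radius of G is strictly less than that of the complete bipartite graph K_{α,k−α}. -/

import Mathlib

open scoped Classical

noncomputable section

namespace BiBlockPaper

variable {V : Type*}

/-- A set of vertices is independent: no two of its vertices are adjacent. -/
def IsIndep (G : SimpleGraph V) (s : Set V) : Prop :=
  s.Pairwise fun u w => ¬ G.Adj u w

/-- The independence number of a finite simple graph: the maximum cardinality
of an independent set of vertices. -/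
noncomputable def indepNum [Fintype V] (G : SimpleGraph V) : ℕ :=
  sSup {k : ℕ | ∃ s : Set V, IsIndep G s ∧ s.ncard = k}

/-- The (real) adjacency matrix of a finite simple graph. -/
noncomputable def adjMat [Fintype V] (G : SimpleGraph V) : Matrix V V ℝ :=
  fun i j => if G.Adj i j then 1 else 0

/-- The spectral radius of a finite simple graph: the largest (real) eigenvalue of
its adjacency matrix. -/
noncomputable def specRad [Fintype V] (G : SimpleGraph V) : ℝ :=
  sSup {t : ℝ | ∃ X : V → ℝ, X ≠ 0 ∧ (adjMat G).mulVec X = t • X}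

/-- `v` is a cut-vertex of the subgraph `H`: it belongs to `H` and deleting it
disconnects `H`. -/
def IsCutVtxOfSub {G : SimpleGraph V} (H : G.Subgraph) (v : V) : Prop :=
  v ∈ H.verts ∧ ¬ (H.deleteVerts {v}).coe.Preconnected

/-- `H` is a block of `G`: a maximal connected subgraph of `G` having no cut-vertex. -/
def IsBlock (G : SimpleGraph V) (H : G.Subgraph) : Prop :=
  H.Connected ∧ (∀ v, ¬ IsCutVtxOfSub H v) ∧
    ∀ H' : G.Subgraph, H ≤ H' → H'.Connected → (∀ v, ¬ IsCutVtxOfSub H' v) → H' = H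

/-- A subgraph is a complete bipartite graph (on its own vertex set). -/
def SubIsCompleteBipartite {G : SimpleGraph V} (H : G.Subgraph) : Prop :=
  ∃ M N : Set V, M.Nonempty ∧ N.Nonempty ∧ Disjoint M N ∧ M ∪ N = H.verts ∧
    ∀ u w, H.Adj u w ↔ (u ∈ M ∧ w ∈ N) ∨ (u ∈ N ∧ w ∈ M)

/-- A bi-block graph: a connected graph each of whose blocks is a complete
bipartite graph. -/
def IsBiBlockGraph (G : SimpleGraph V) : Prop :=
  G.Connected ∧ ∀ H : G.Subgraph, IsBlock G H → SubIsCompleteBipartite H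

/-- `v` is a cut-vertex of `G`: deleting `v` disconnects `G`. -/
def IsCutVertex (G : SimpleGraph V) (v : V) : Prop :=
  ¬ (G.induce ({v}ᶜ : Set V)).Preconnected

/-- The block index of `v`: the number of blocks of `G` containing `v`. -/
noncomputable def blockIndex (G : SimpleGraph V) (v : V) : ℕ :=
  {H : G.Subgraph | IsBlock G H ∧ v ∈ H.verts}.ncard

/-- `G` is a complete bipartite graph. -/
def IsCompleteBipartite (G : SimpleGraph V) : Prop :=
  ∃ M N : Set V, M.Nonempty ∧ N.Nonempty ∧ Disjoint M N ∧ M ∪ N = Set.univ ∧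
    ∀ u w, G.Adj u w ↔ (u ∈ M ∧ w ∈ N) ∨ (u ∈ N ∧ w ∈ M)

/-- Vertex type of the two-block graph `G(p,q,m,n)`: the parts are
`P` (size `p`), `Q \ {v}` (size `q-1`), the glue vertex `v`,
`M \ {v}` (size `m-1`) and `N` (size `n`). -/
abbrev TBV (p q m n : ℕ) : Type :=
  Fin p ⊕ (Fin (q - 1) ⊕ (Unit ⊕ (Fin (m - 1) ⊕ Fin n)))

/-- Which of the five pieces of `TBV p q m n` a vertex lies in:
`0 ↦ P`, `1 ↦ Q \ {v}`, `2 ↦ v`, `3 ↦ M \ {v}`, `4 ↦ N`.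
So `Q` consists of the vertices with tag `1` or `2`, and `M` of those with tag `2` or `3`. -/
def part {p q m n : ℕ} : TBV p q m n → ℕ
  | Sum.inl _ => 0
  | Sum.inr (Sum.inl _) => 1
  | Sum.inr (Sum.inr (Sum.inl _)) => 2
  | Sum.inr (Sum.inr (Sum.inr (Sum.inl _))) => 3
  | Sum.inr (Sum.inr (Sum.inr (Sum.inr _))) => 4

/-- The two-block graph `G(p,q,m,n)`: two complete bipartite blocks
`K(P,Q)` and `K(M,N)` glued at the cut-vertex `v`, where `Q ∩ M = {v}`. -/
def twoBlock (p q m n : ℕ) : SimpleGraph (TBV p q m n) where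
  Adj x y :=
    (part x = 0 ∧ (part y = 1 ∨ part y = 2)) ∨
    ((part x = 1 ∨ part x = 2) ∧ part y = 0) ∨
    ((part x = 2 ∨ part x = 3) ∧ part y = 4) ∨
    (part x = 4 ∧ (part y = 2 ∨ part y = 3))
  symm := ⟨fun x y h => by tauto⟩
  loopless := ⟨fun x h => by omega⟩

/-- The glue (cut-)vertex `v` of `G(p,q,m,n)`. -/
def glue (p q m n : ℕ) : TBV p q m n := Sum.inr (Sum.inr (Sum.inl ()))

/-!
`G(p,q,m,n)` is bipartite, so every neighbourhood is independent and the walks of length two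
leaving a vertex use distinct edges: the row sums of `A²` are at most `e = pq + mn`, hence
`ρ² ≤ e` (Nosal's bound). An independent set avoids `P` or `Q ∖ v`, avoids `M ∖ v` or `N`, and
avoids `P ∪ N` if it contains `v`, so `α` is the largest of `|P ∪ N|`, `|P ∪ M ∖ v|`,
`|Q ∖ v ∪ N|`, `|Q ∪ M|`; checking each case gives `pq + mn < α (k - α)`.
-/

open Finset Matrix SimpleGraph

section Graph

variable [Fintype V]

theorem abs_le_of_mulVec_eq_smul {A : Matrix V V ℝ}
    {R t : ℝ} {X : V → ℝ} (hR : ∀ i, ∑ j, |A i j| ≤ R) (hX : X ≠ 0)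
    (hE : A *ᵥ X = t • X) : |t| ≤ R := by
  obtain ⟨k, hk⟩ := eigenvalue_mem_ball (Module.End.hasEigenvalue_of_hasEigenvector
    ⟨Module.End.mem_eigenspace_iff.2 (by rwa [toLin'_apply]), hX⟩)
  rw [Metric.mem_closedBall, Real.dist_eq] at hk
  calc |t| ≤ |A k k| + |t - A k k| := by
        simpa using abs_add_le (A k k) (t - A k k)
    _ ≤ ∑ j, |A k j| := by
        rw [← add_sum_erase _ _ (mem_univ k)]; simp only [Real.norm_eq_abs] at hk; linarith
    _ ≤ R := hR k

variable {G : SimpleGraph V}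

theorem sum_degree_neighborFinset_le_card_edgeFinset [DecidableRel G.Adj]
    (hG : G.CliqueFree 3) (v : V) :
    ∑ u ∈ G.neighborFinset v, G.degree u ≤ #G.edgeFinset := by
  classical
  have hdisj : (G.neighborFinset v : Set V).PairwiseDisjoint (G.incidenceFinset ·) := by
    intro u hu w hw huw
    refine Finset.disjoint_left.2 fun e heu hew => ?_
    exact isIndepSet_neighborSet_of_triangleFree G hG v (by simpa using hu) (by simpa using hw)
      huw (G.adj_of_mem_incidenceSet huw (by simpa using heu) (by simpa using hew))
  calc ∑ u ∈ G.neighborFinset v, G.degree u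
      = #((G.neighborFinset v).biUnion (G.incidenceFinset ·)) := by
        simp [card_biUnion hdisj]
    _ ≤ #G.edgeFinset := card_le_card (biUnion_subset.2 fun u _ => G.incidenceFinset_subset u)

theorem adjMat_eq_adjMatrix [DecidableRel G.Adj] : adjMat G = G.adjMatrix ℝ := by
  ext i j; simp [adjMat, adjMatrix_apply]

theorem sq_le_card_edgeFinset_of_mulVec_eq_smul (hG : G.CliqueFree 3) {t : ℝ} {X : V → ℝ}
    (hX : X ≠ 0) (hE : adjMat G *ᵥ X = t • X) : t ^ 2 ≤ #G.edgeFinset := by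
  classical
  rw [adjMat_eq_adjMatrix] at hE
  have hsq : (G.adjMatrix ℝ * G.adjMatrix ℝ) *ᵥ X = t ^ 2 • X := by
    rw [← mulVec_mulVec, hE, mulVec_smul, hE, smul_smul, sq]
  have hrow : ∀ i, ∑ j, |(G.adjMatrix ℝ * G.adjMatrix ℝ) i j| ≤ #G.edgeFinset := by
    intro i
    have hdeg : ∀ u, ∑ j, G.adjMatrix ℝ u j = G.degree u := by
      intro u
      simp [adjMatrix_apply, sum_boole, ← neighborFinset_eq_filter]
    calc ∑ j, |(G.adjMatrix ℝ * G.adjMatrix ℝ) i j|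
        = ∑ u ∈ G.neighborFinset i, ∑ j, G.adjMatrix ℝ u j := by
          simp only [adjMatrix_mul_apply]
          refine (sum_congr rfl fun j _ => abs_of_nonneg (sum_nonneg fun u _ => ?_)).trans sum_comm
          rw [adjMatrix_apply]; split_ifs <;> norm_num
      _ ≤ #G.edgeFinset := by
        simp only [hdeg]
        exact_mod_cast sum_degree_neighborFinset_le_card_edgeFinset hG i
  simpa using abs_le_of_mulVec_eq_smul hrow hX hsq

theorem specRad_le_sqrt_card_edgeFinset (hG : G.CliqueFree 3) :
    specRad G ≤ √(#G.edgeFinset : ℝ) := by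
  refine Real.sSup_le ?_ (Real.sqrt_nonneg _)
  rintro t ⟨X, hX, hE⟩
  exact (le_abs_self t).trans
    (Real.abs_le_sqrt (sq_le_card_edgeFinset_of_mulVec_eq_smul hG hX hE))

theorem indepNum_eq_of_isIndep {s : Set V} {a : ℕ} (hs : IsIndep G s) (hsa : s.ncard = a)
    (hmax : ∀ t, IsIndep G t → t.ncard ≤ a) : indepNum G = a :=
  IsGreatest.csSup_eq ⟨⟨s, hs, hsa⟩, fun _ ⟨t, ht, htk⟩ => htk ▸ hmax t ht⟩

end Graph

section TwoBlock

variable {p q m n : ℕ}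

theorem twoBlock_adj {x y : TBV p q m n} : (twoBlock p q m n).Adj x y ↔
    (part x = 0 ∧ (part y = 1 ∨ part y = 2)) ∨
    ((part x = 1 ∨ part x = 2) ∧ part y = 0) ∨
    ((part x = 2 ∨ part x = 3) ∧ part y = 4) ∨
    (part x = 4 ∧ (part y = 2 ∨ part y = 3)) := Iff.rfl

theorem twoBlock_cliqueFree_three : (twoBlock p q m n).CliqueFree 3 := by
  intro s hs
  obtain ⟨a, b, c, hab, hac, hbc, -⟩ := is3Clique_iff.1 hs
  rw [twoBlock_adj] at hab hac hbc
  omega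

theorem card_edgeFinset_twoBlock (hq : 0 < q) (hm : 0 < m) :
    #(twoBlock p q m n).edgeFinset = p * q + m * n := by
  obtain ⟨q, rfl⟩ : ∃ q', q = q' + 1 := ⟨q - 1, by omega⟩
  obtain ⟨m, rfl⟩ : ∃ m', m = m' + 1 := ⟨m - 1, by omega⟩
  have h := sum_degrees_eq_twice_card_edges (twoBlock p (q + 1) (m + 1) n)
  simp only [← card_neighborFinset_eq_degree, neighborFinset_eq_filter, card_filter,
    Fintype.sum_sum_type, twoBlock_adj, part] at h
  norm_num at h
  linarith

theorem part_le (x : TBV p q m n) : part x ≤ 4 := by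
  rcases x with _ | _ | _ | _ | _ <;> simp [part]

theorem IsIndep.subset_preimage_part {s : Set (TBV p q m n)} (hs : IsIndep (twoBlock p q m n) s) :
    s ⊆ part ⁻¹' {0, 4} ∨ s ⊆ part ⁻¹' {0, 3} ∨ s ⊆ part ⁻¹' {1, 4} ∨
      s ⊆ part ⁻¹' {1, 2, 3} := by
  have hna : ∀ x ∈ s, ∀ y ∈ s, ¬ (twoBlock p q m n).Adj x y :=
    fun x hx y hy hxy => hs hx hy hxy.ne hxy
  simp only [Set.subset_def, Set.mem_preimage, Set.mem_insert_iff, Set.mem_singleton_iff]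
  by_contra! h
  obtain ⟨⟨a, ha, ha'⟩, ⟨b, hb, hb'⟩, ⟨c, hc, hc'⟩, ⟨d, hd, hd'⟩⟩ := h
  have := part_le a
  have := part_le b
  have := part_le c
  obtain hd' | hd' : part d = 0 ∨ part d = 4 := by have := part_le d; omega
  · have hda := hna d hd a ha
    have hdb := hna d hd b hb
    have hab := hna a ha b hb
    rw [twoBlock_adj] at hda hdb hab
    simp only [hd'] at hda hdb
    norm_num at hda hdb hab
    omega
  · have hda := hna d hd a ha
    have hdc := hna d hd c hc
    have hac := hna a ha c hc
    rw [twoBlock_adj] at hda hdc hac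
    simp only [hd'] at hda hdc
    norm_num at hda hdc hac
    omega

theorem isIndep_preimage_part {S : Set ℕ}
    (hS : S = {0, 4} ∨ S = {0, 3} ∨ S = {1, 4} ∨ S = {1, 2, 3}) :
    IsIndep (twoBlock p q m n) (part ⁻¹' S) := by
  rintro x hx y hy - hxy
  rw [twoBlock_adj] at hxy
  rcases hS with rfl | rfl | rfl | rfl <;> simp at hx hy <;> omega

theorem sum_comp_part {M : Type*} [AddCommMonoid M] (f : ℕ → M) :
    ∑ x : TBV p q m n, f (part x) = p • f 0 + (q - 1) • f 1 + f 2 + (m - 1) • f 3 + n • f 4 := by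
  simp [Fintype.sum_sum_type, part, add_assoc]

theorem ncard_preimage_part (S : Set ℕ) :
    (part ⁻¹' S : Set (TBV p q m n)).ncard = p • S.indicator 1 0 + (q - 1) • S.indicator 1 1 +
      S.indicator 1 2 + (m - 1) • S.indicator 1 3 + n • S.indicator 1 4 := by
  rw [← sum_comp_part, Set.ncard_eq_toFinset_card']
  simp [Set.indicator_apply]

theorem indepNum_twoBlock (hq : 0 < q) (hm : 0 < m) :
    indepNum (twoBlock p q m n) =
      max (max (p + n) (p + m - 1)) (max (q + n - 1) (q + m - 1)) := by
  set α := max (max (p + n) (p + m - 1)) (max (q + n - 1) (q + m - 1)) with hα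
  have h04 : (part ⁻¹' {0, 4} : Set (TBV p q m n)).ncard = p + n := by
    simp [ncard_preimage_part]
  have h03 : (part ⁻¹' {0, 3} : Set (TBV p q m n)).ncard = p + m - 1 := by
    simp [ncard_preimage_part]; omega
  have h14 : (part ⁻¹' {1, 4} : Set (TBV p q m n)).ncard = q + n - 1 := by
    simp [ncard_preimage_part]; omega
  have h123 : (part ⁻¹' {1, 2, 3} : Set (TBV p q m n)).ncard = q + m - 1 := by
    simp [ncard_preimage_part]; omega
  have hmax : ∀ t, IsIndep (twoBlock p q m n) t → t.ncard ≤ α := by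
    intro t ht
    rcases ht.subset_preimage_part with h | h | h | h <;>
      have := Set.ncard_le_ncard h <;> omega
  obtain h | h | h | h : α = p + n ∨ α = p + m - 1 ∨ α = q + n - 1 ∨ α = q + m - 1 := by omega
  · exact indepNum_eq_of_isIndep (isIndep_preimage_part (by simp)) (h04.trans h.symm) hmax
  · exact indepNum_eq_of_isIndep (isIndep_preimage_part (by simp)) (h03.trans h.symm) hmax
  · exact indepNum_eq_of_isIndep (isIndep_preimage_part (by simp)) (h14.trans h.symm) hmax
  · exact indepNum_eq_of_isIndep (isIndep_preimage_part (by simp)) (h123.trans h.symm) hmax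

theorem mul_add_mul_lt_mul_sub {α : ℕ} (hp : 0 < p) (hq : 0 < q) (hm : 0 < m) (hn : 0 < n)
    (hqm : ¬(q = 1 ∧ m = 1))
    (hα : α = max (max (p + n) (p + m - 1)) (max (q + n - 1) (q + m - 1))) :
    ((p * q + m * n : ℕ) : ℝ) < α * ((p + q + m + n - 1 : ℝ) - α) := by
  have hp' : (1 : ℝ) ≤ p := by exact_mod_cast hp
  have hq' : (1 : ℝ) ≤ q := by exact_mod_cast hq
  have hm' : (1 : ℝ) ≤ m := by exact_mod_cast hm
  have hn' : (1 : ℝ) ≤ n := by exact_mod_cast hn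
  have hqm' : (3 : ℝ) ≤ q + m := by norm_cast; omega
  push_cast
  obtain h | ⟨h, hnm⟩ | ⟨h, hpq⟩ | h : α = p + n ∨ (α + 1 = p + m ∧ n < m) ∨
      (α + 1 = q + n ∧ p < q) ∨ α + 1 = q + m := by omega
  · rw [h]; push_cast; nlinarith
  · have h : (α : ℝ) + 1 = p + m := by exact_mod_cast h
    have hnm : (n : ℝ) + 1 ≤ m := by exact_mod_cast hnm
    nlinarith
  · have h : (α : ℝ) + 1 = q + n := by exact_mod_cast h
    have hpq : (p : ℝ) + 1 ≤ q := by exact_mod_cast hpq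
    nlinarith
  · have h : (α : ℝ) + 1 = q + m := by exact_mod_cast h
    nlinarith

end TwoBlock

/-- For positive integers `p,q,m,n`, not both `q = 1` and `m = 1`,
the spectral radius of the two-block graph `G(p,q,m,n)` on `k = p+q+m+n-1`
vertices with independence number `α` is strictly less than `√(α(k-α))`. -/
theorem twoBlock_specRad_lt {p q m n : ℕ}
    (hp : 0 < p) (hq : 0 < q) (hm : 0 < m) (hn : 0 < n)
    (hqm : ¬ (q = 1 ∧ m = 1)) :
    specRad (twoBlock p q m n) <
      Real.sqrt ((indepNum (twoBlock p q m n) : ℝ) *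
        (((p : ℝ) + q + m + n - 1) - (indepNum (twoBlock p q m n) : ℝ))) := by
  calc specRad (twoBlock p q m n)
      ≤ √(#(twoBlock p q m n).edgeFinset : ℝ) :=
        specRad_le_sqrt_card_edgeFinset twoBlock_cliqueFree_three
    _ < _ := by
        rw [card_edgeFinset_twoBlock hq hm, indepNum_twoBlock hq hm]
        exact Real.sqrt_lt_sqrt (Nat.cast_nonneg _) (mul_add_mul_lt_mul_sub hp hq hm hn hqm rfl)

end BiBlockPaper
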